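/- arXiv:2310.07919 — 4 statements merged into one kernel-verified Lean document; each statement's English description precedes it below -/
import Mathlib

section
/- Let (V,E) be a history sDAG or a subhistory thereof on labels Y, and let v ∈ V with v ≠ ρ. Then the set of labels of leaf nodes reachable from v via directed edges equals the clade union CU(v). -/
universe u v

/-- A node of a history sDAG: either the universal ancestor (UA) node `ρ`,
or a node carrying a label `ℓ : Y` and a subpartition `U : Set (Set Y)`. -/
inductive HNode (Y : Type u) : Type u
  | ua : HNode Y
  | node : Y → Set (Set Y) → HNode Y

namespace HistorySDAGs

variable {Y : Type u}

/-- `U ∈ Part(Y)`: `U` is a set of pairwise disjoint nonempty (finite) clades with `|U| ≠ 1`. -/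
def IsPart (U : Set (Set Y)) : Prop :=
  (∀ C ∈ U, C ≠ ∅) ∧
  (∀ C₁ ∈ U, ∀ C₂ ∈ U, C₁ ≠ C₂ → Disjoint C₁ C₂) ∧
  (∀ C, U ≠ {C}) ∧
  U.Finite ∧ ∀ C ∈ U, C.Finite

open Classical in
/-- The clade union of a node. -/
noncomputable def cladeUnion : HNode Y → Set Y
  | HNode.ua => ∅
  | HNode.node ℓ U => if U = ∅ then {ℓ} else ⋃₀ U

/-- Reachability via directed edges in `E`. -/
def Reach (E : Set (HNode Y × HNode Y)) (a b : HNode Y) : Prop :=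
  Relation.ReflTransGen (fun x y => (x, y) ∈ E) a b

/-- `(V, E)` is a history sDAG on labels `Y`. -/
structure IsHSDAG (V : Set (HNode Y)) (E : Set (HNode Y × HNode Y)) : Prop where
  ua_mem : HNode.ua ∈ V
  valid : ∀ ℓ U, HNode.node ℓ U ∈ V → IsPart U
  edge_mem : ∀ e ∈ E, e.1 ∈ V ∧ e.2 ∈ V
  reach_ua : ∀ v ∈ V, Reach E HNode.ua v
  no_in_ua : ∀ v : HNode Y, (v, HNode.ua) ∉ E
  edge_clade : ∀ ℓ U v, (HNode.node ℓ U, v) ∈ E → cladeUnion v ∈ U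
  clade_cov : ∀ ℓ U, HNode.node ℓ U ∈ V → ∀ C ∈ U,
      ∃ v, (HNode.node ℓ U, v) ∈ E ∧ cladeUnion v = C

/-- Every node-clade pair of `V` has exactly one descendant edge in `E`. -/
def UniqueDesc (V : Set (HNode Y)) (E : Set (HNode Y × HNode Y)) : Prop :=
  ∀ ℓ U, HNode.node ℓ U ∈ V → ∀ C ∈ U,
    ∃! vc, (HNode.node ℓ U, vc) ∈ E ∧ cladeUnion vc = C

/-- `(V, E)` is a history: a history sDAG in which `ρ` has exactly one child and
each node-clade pair has exactly one descendant edge. -/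
def IsHistory (V : Set (HNode Y)) (E : Set (HNode Y × HNode Y)) : Prop :=
  IsHSDAG V E ∧ (∃! v, (HNode.ua, v) ∈ E) ∧ UniqueDesc V E

/-- `(Vs, Es)` is a subhistory of `(V, E)` with root node `vr`. -/
structure IsSubhistoryRooted (V : Set (HNode Y)) (E : Set (HNode Y × HNode Y))
    (Vs : Set (HNode Y)) (Es : Set (HNode Y × HNode Y)) (vr : HNode Y) : Prop where
  subV : Vs ⊆ V
  subE : Es ⊆ E
  ua_not_mem : HNode.ua ∉ Vs
  edge_mem : ∀ e ∈ Es, e.1 ∈ Vs ∧ e.2 ∈ Vs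
  root_mem : vr ∈ Vs
  reach_root : ∀ v ∈ Vs, Reach Es vr v
  unique_desc : ∀ ℓ U, HNode.node ℓ U ∈ Vs → ∀ C ∈ U,
      ∃! vc, (HNode.node ℓ U, vc) ∈ Es ∧ cladeUnion vc = C

/-- `(Vs, Es)` is a subhistory of `(V, E)`. -/
def IsSubhistory (V : Set (HNode Y)) (E : Set (HNode Y × HNode Y))
    (Vs : Set (HNode Y)) (Es : Set (HNode Y × HNode Y)) : Prop :=
  ∃ vr, IsSubhistoryRooted V E Vs Es vr

/-- `(Vt, Et)` is a history in (a trim of) the history sDAG `(V, E)`. -/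
def HistoryIn (V : Set (HNode Y)) (E : Set (HNode Y × HNode Y))
    (Vt : Set (HNode Y)) (Et : Set (HNode Y × HNode Y)) : Prop :=
  Vt ⊆ V ∧ Et ⊆ E ∧ IsHistory Vt Et

/-- The set of labels of leaf nodes in a node set. -/
def leafLabels (Vt : Set (HNode Y)) : Set Y := {ℓ | HNode.node ℓ ∅ ∈ Vt}

/-- A candidate history/graph: a pair of a node set and an edge set. -/
abbrev Hist (Y : Type u) := Set (HNode Y) × Set (HNode Y × HNode Y)

/-- The node set of the history sDAG constructed from the collection `T`. -/
def unionV (T : Set (Hist Y)) : Set (HNode Y) := ⋃ t ∈ T, t.1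

/-- The edge set of the history sDAG constructed from the collection `T`. -/
def unionE (T : Set (Hist Y)) : Set (HNode Y × HNode Y) := ⋃ t ∈ T, t.2

/-- The node set of the complete history sDAG on labels `Y`. -/
def completeV (Y : Type u) : Set (HNode Y) :=
  {v | v = HNode.ua ∨ ∃ ℓ U, v = HNode.node ℓ U ∧ IsPart U}

/-- The edge set of the complete history sDAG on labels `Y`. -/
def completeE (Y : Type u) : Set (HNode Y × HNode Y) :=
  {e | e.1 ∈ completeV Y ∧ e.2 ∈ completeV Y ∧ e.2 ≠ HNode.ua ∧
    (e.1 = HNode.ua ∨ ∃ ℓ U, e.1 = HNode.node ℓ U ∧ cladeUnion e.2 ∈ U)}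

variable {W : Type v}

/-- The weight `g_f` of a subgraph with edge set `Es`: the sum of `f` over all edges. -/
noncomputable def gweight [AddCommMonoid W] (f : HNode Y × HNode Y → W)
    (Es : Set (HNode Y × HNode Y)) : W := ∑ᶠ e ∈ Es, f e

/-- The order is total on the subset `S` of `W`. -/
def TotalOn [PartialOrder W] (S : Set W) : Prop := ∀ a ∈ S, ∀ b ∈ S, a ≤ b ∨ b ≤ a

/-- The order respects addition on the subset `S` of `W`. -/
def RespectsAdd [AddCommMonoid W] [PartialOrder W] (S : Set W) : Prop :=
  ∀ a ∈ S, ∀ b ∈ S, ∀ c : W, a < b ↔ a + c < b + c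

/-- Weights of subhistories of `(V, E)` rooted at `v`. -/
def subWeights [AddCommMonoid W] (f : HNode Y × HNode Y → W)
    (V : Set (HNode Y)) (E : Set (HNode Y × HNode Y)) (v : HNode Y) : Set W :=
  {w | ∃ Vs Es, IsSubhistoryRooted V E Vs Es v ∧ w = gweight f Es}

/-- Weights of augmented subhistories below the node-clade pair `(v, C)`. -/
def augWeights [AddCommMonoid W] (f : HNode Y × HNode Y → W)
    (V : Set (HNode Y)) (E : Set (HNode Y × HNode Y)) (v : HNode Y) (C : Set Y) : Set W :=
  {w | ∃ vc Vs Es, (v, vc) ∈ E ∧ cladeUnion vc = C ∧ IsSubhistoryRooted V E Vs Es vc ∧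
    w = gweight f (insert (v, vc) Es)}

/-- Weights of histories in `(V, E)`. -/
def historyWeights [AddCommMonoid W] (f : HNode Y × HNode Y → W)
    (V : Set (HNode Y)) (E : Set (HNode Y × HNode Y)) : Set W :=
  {w | ∃ Vt Et, HistoryIn V E Vt Et ∧ w = gweight f Et}

/-- `W` is clade-ordered with respect to `f` and `(V, E)`. -/
def CladeOrdered [AddCommMonoid W] [PartialOrder W] (f : HNode Y × HNode Y → W)
    (V : Set (HNode Y)) (E : Set (HNode Y × HNode Y)) : Prop :=
  (∀ v ∈ V, v ≠ HNode.ua →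
      TotalOn (subWeights f V E v) ∧ RespectsAdd (subWeights f V E v)) ∧
  (∀ ℓ U, HNode.node ℓ U ∈ V → ∀ C ∈ U,
      TotalOn (augWeights f V E (HNode.node ℓ U) C) ∧
      RespectsAdd (augWeights f V E (HNode.node ℓ U) C)) ∧
  TotalOn (historyWeights f V E)

/-- The minimum-weight histories in `(V, E)` with respect to `g_f`. -/
def minHistories [AddCommMonoid W] [PartialOrder W] (f : HNode Y × HNode Y → W)
    (V : Set (HNode Y)) (E : Set (HNode Y × HNode Y)) : Set (Hist Y) :=
  {t | HistoryIn V E t.1 t.2 ∧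
    ∀ t' : Hist Y, HistoryIn V E t'.1 t'.2 → gweight f t.2 ≤ gweight f t'.2}

open Classical in
/-- The map `q` collapsing the edge `(vp, vc)`, sending both `vp` and `vc` to `vp'`. -/
noncomputable def collapseMap (vp vc vp' : HNode Y) (v : HNode Y) : HNode Y :=
  if v = vp ∨ v = vc then vp' else v

/-- The history obtained by collapsing the edge `(vp, vc)` (into `vp'`) in `t`. -/
noncomputable def collapseEdgeHist (vp vc vp' : HNode Y) (t : Hist Y) : Hist Y :=
  (collapseMap vp vc vp' '' t.1,
   (fun e : HNode Y × HNode Y => (collapseMap vp vc vp' e.1, collapseMap vp vc vp' e.2)) ''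
     (t.2 \ {(vp, vc)}))

/-- The new parent node `(ℓ_p, (U_p ∪ U_c) \ {CU(v_c)})` formed when collapsing an edge. -/
noncomputable def newParent : HNode Y → HNode Y → HNode Y
  | HNode.node ℓp Up, HNode.node ℓc Uc =>
      HNode.node ℓp ((Up ∪ Uc) \ {cladeUnion (HNode.node ℓc Uc)})
  | v, _ => v

/-- `t'` results from `t` by collapsing one label-collapsible edge. -/
def LabelCollapseStep (t t' : Hist Y) : Prop :=
  ∃ ℓ Up Uc, (HNode.node ℓ Up, HNode.node ℓ Uc) ∈ t.2 ∧ Uc ≠ ∅ ∧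
    t' = collapseEdgeHist (HNode.node ℓ Up) (HNode.node ℓ Uc)
        (newParent (HNode.node ℓ Up) (HNode.node ℓ Uc)) t

/-- `t` is label-collapsed: it has no label-collapsible edge. -/
def LabelCollapsed (t : Hist Y) : Prop :=
  ∀ ℓ Up Uc, (HNode.node ℓ Up, HNode.node ℓ Uc) ∈ t.2 → Uc = ∅

/-- `(vp, vc)` is a label-collapsible edge of `G`. -/
def LabelCollapsibleEdge (G : Hist Y) (vp vc : HNode Y) : Prop :=
  (vp, vc) ∈ G.2 ∧ ∃ ℓ Up Uc, vp = HNode.node ℓ Up ∧ vc = HNode.node ℓ Uc ∧ Uc ≠ ∅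

/-- `T` is a label-collapsible edge cover of `G`. -/
def LabelCollapsibleEdgeCover (G : Hist Y) (T : Set (Hist Y)) : Prop :=
  (∀ t ∈ T, HistoryIn G.1 G.2 t.1 t.2) ∧
  (∀ e ∈ G.2, ∃ t ∈ T, e ∈ t.2) ∧
  (∀ vp vc, LabelCollapsibleEdge G vp vc →
    ∀ Vs Es, IsSubhistory G.1 G.2 Vs Es → (vp, vc) ∈ Es →
      ∃ t ∈ T, Vs ⊆ t.1 ∧ Es ⊆ t.2)

open Classical in
/-- Collapsing the edge `(vp, vc)` in the history sDAG `G`, via `E⁺`, `R`, `E⁻`, `E'`, `V'`. -/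
noncomputable def collapseDAGEdge (vp vc : HNode Y) (G : Hist Y) : Hist Y :=
  let vp' := newParent vp vc
  let Eplus : Set (HNode Y × HNode Y) :=
    (G.2 ∪ {e | ∃ v, e = (v, vp') ∧ (v, vp) ∈ G.2}
        ∪ {e | ∃ v, e = (vp', v) ∧ (vp, v) ∈ G.2 ∧ cladeUnion v ≠ cladeUnion vc}
        ∪ {e | ∃ v, e = (vp', v) ∧ (vc, v) ∈ G.2}) \ {(vp, vc)}
  let R : Set (HNode Y × HNode Y) :=
    if ∃ v, (vp, v) ∈ Eplus ∧ cladeUnion v = cladeUnion vc then ∅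
    else {e ∈ Eplus | e.2 = vp}
  let Eminus := Eplus \ R
  let E' := {e ∈ Eminus | Reach Eminus HNode.ua e.1}
  ({v | ∃ e ∈ E', v = e.1 ∨ v = e.2}, E')

/-- `t'` is obtained from `t` by a subhistory swap, replacing a subhistory of `t` by a
conforming subhistory of some history in `S`. -/
def SwapStepUsing (S : Set (Hist Y)) (t t' : Hist Y) : Prop :=
  ∃ t₂ ∈ S, ∃ Vs' Es' vr' vp,
    IsSubhistoryRooted t₂.1 t₂.2 Vs' Es' vr' ∧ (vp, vr') ∈ t₂.2 ∧
    ∃ Vs Es vr, IsSubhistoryRooted t.1 t.2 Vs Es vr ∧ (vp, vr) ∈ t.2 ∧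
      leafLabels Vs = leafLabels Vs' ∧
      t' = ((t.1 \ Vs) ∪ Vs', (t.2 \ (Es ∪ {(vp, vr)})) ∪ (Es' ∪ {(vp, vr')}))

/-- Leaves of an abstract rooted graph. -/
def IsLeafIn {α : Type v} (nodes : Set α) (edges : Set (α × α)) (x : α) : Prop :=
  x ∈ nodes ∧ ∀ c, (x, c) ∉ edges

/-- Reachability via directed edges in an abstract graph. -/
def GReach {α : Type v} (edges : Set (α × α)) (a b : α) : Prop :=
  Relation.ReflTransGen (fun x y => (x, y) ∈ edges) a b

/-- An (internally) labeled tree: a rooted multifurcating tree with no unifurcations,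
with node labels in `Y` that are injective on leaves. -/
structure IsLabeledTree {α : Type v} (nodes : Set α) (edges : Set (α × α))
    (root : α) (lab : α → Y) : Prop where
  root_mem : root ∈ nodes
  edge_mem : ∀ e ∈ edges, e.1 ∈ nodes ∧ e.2 ∈ nodes
  reach_root : ∀ x ∈ nodes, GReach edges root x
  unique_parent : ∀ x a b, (a, x) ∈ edges → (b, x) ∈ edges → a = b
  no_parent_root : ∀ a, (a, root) ∉ edges
  acyclic : ∀ x, ¬ Relation.TransGen (fun a b => (a, b) ∈ edges) x x
  no_unif : ∀ x ∈ nodes, ¬ (∃! c, (x, c) ∈ edges)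
  leaf_inj : ∀ x y, IsLeafIn nodes edges x → IsLeafIn nodes edges y → lab x = lab y → x = y
  finite : nodes.Finite

/-- The set `C_w` of leaf labels below a node `w` of an abstract labeled tree. -/
def leavesBelow {α : Type v} (nodes : Set α) (edges : Set (α × α)) (lab : α → Y) (w : α) :
    Set Y :=
  {y | ∃ u, IsLeafIn nodes edges u ∧ GReach edges w u ∧ y = lab u}

/-- The history sDAG node `v_w` associated to a node `w` of a labeled tree. -/
def treeNodeOf {α : Type v} (nodes : Set α) (edges : Set (α × α)) (lab : α → Y) (w : α) :
    HNode Y :=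
  HNode.node (lab w) {C | ∃ w', (w, w') ∈ edges ∧ C = leavesBelow nodes edges lab w'}

/-- The node set `V_t` of the history associated to a labeled tree. -/
def treeToHistV {α : Type v} (nodes : Set α) (edges : Set (α × α)) (lab : α → Y) :
    Set (HNode Y) :=
  insert HNode.ua (treeNodeOf nodes edges lab '' nodes)

/-- The edge set `E_t` of the history associated to a labeled tree. -/
def treeToHistE {α : Type v} (nodes : Set α) (edges : Set (α × α)) (root : α) (lab : α → Y) :
    Set (HNode Y × HNode Y) :=
  insert (HNode.ua, treeNodeOf nodes edges lab root)
    {e | ∃ w₁ w₂, (w₁, w₂) ∈ edges ∧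
      e = (treeNodeOf nodes edges lab w₁, treeNodeOf nodes edges lab w₂)}


theorem aux_reachable_leaf_labels
    (V : Set (HNode Y)) (E : Set (HNode Y × HNode Y))
    (hvalid : ∀ ℓ U, HNode.node ℓ U ∈ V → IsPart U)
    (hedge : ∀ e ∈ E, e.1 ∈ V ∧ e.2 ∈ V)
    (hclade : ∀ ℓ U w, (HNode.node ℓ U, w) ∈ E → cladeUnion w ∈ U)
    (hcov : ∀ ℓ U, HNode.node ℓ U ∈ V → ∀ C ∈ U,
      ∃ w, (HNode.node ℓ U, w) ∈ E ∧ cladeUnion w = C)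
    (hnoua : ∀ a b, (a, b) ∈ E → b ≠ HNode.ua)
    (v : HNode Y) (hv : v ∈ V) (hne : v ≠ HNode.ua) :
    {ℓ : Y | Reach E v (HNode.node ℓ ∅)} = cladeUnion v := by
  -- basic facts
  have hcufin : ∀ w ∈ V, w ≠ HNode.ua → (cladeUnion w).Finite := by
    intro w hw hwne
    cases w with
    | ua => exact absurd rfl hwne
    | node ℓ U =>
      by_cases hU : U = ∅
      · simp [cladeUnion, hU]
      · obtain ⟨-, -, -, hUfin, hCfin⟩ := hvalid ℓ U hw
        simpa [cladeUnion, hU] using Set.Finite.sUnion hUfin hCfin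
  have hcune : ∀ w ∈ V, w ≠ HNode.ua → (cladeUnion w).Nonempty := by
    intro w hw hwne
    cases w with
    | ua => exact absurd rfl hwne
    | node ℓ U =>
      by_cases hU : U = ∅
      · simp [cladeUnion, hU]
      · obtain ⟨hne', -, -, -, -⟩ := hvalid ℓ U hw
        obtain ⟨C, hC⟩ := Set.nonempty_iff_ne_empty.mpr hU
        obtain ⟨y, hy⟩ := Set.nonempty_iff_ne_empty.mpr (hne' C hC)
        refine ⟨y, ?_⟩
        simp only [cladeUnion, if_neg hU, Set.mem_sUnion]
        exact ⟨C, hC, hy⟩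
  apply Set.eq_of_subset_of_subset
  · -- ⊆ : reached leaf labels are in cladeUnion
    intro ℓ hℓ
    simp only [Set.mem_setOf_eq] at hℓ
    -- head induction on reachability
    revert hv hne
    induction hℓ using Relation.ReflTransGen.head_induction_on with
    | refl =>
      intro hv hne
      simp [cladeUnion]
    | head hab _ ih =>
      rename_i a c hrt
      intro hv hne
      have hc : c ∈ V := (hedge _ hab).2
      have hcne : c ≠ HNode.ua := hnoua a c hab
      have hlc : ℓ ∈ cladeUnion c := ih hc hcne
      cases a with
      | ua => exact absurd rfl hne
      | node ℓa Ua =>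
        have hCU : cladeUnion c ∈ Ua := hclade ℓa Ua c hab
        have hUane : Ua ≠ ∅ := by
          intro h'; rw [h'] at hCU; exact hCU
        simp only [cladeUnion, if_neg hUane]
        exact ⟨cladeUnion c, hCU, hlc⟩
  · -- ⊇ : cladeUnion is contained in reached leaf labels
    have key : ∀ n : ℕ, ∀ w ∈ V, w ≠ HNode.ua → (cladeUnion w).ncard ≤ n →
        ∀ y ∈ cladeUnion w, Reach E w (HNode.node y ∅) := by
      intro n
      induction n with
      | zero =>
        intro w hw hwne hcard y hy
        have := (Set.ncard_pos (hcufin w hw hwne)).mpr ⟨y, hy⟩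
        omega
      | succ n ih =>
        intro w hw hwne hcard y hy
        cases w with
        | ua => exact absurd rfl hwne
        | node ℓ U =>
          by_cases hU : U = ∅
          · simp only [cladeUnion, hU, if_pos rfl, Set.mem_singleton_iff] at hy
            subst hy
            rw [hU]
            exact Relation.ReflTransGen.refl
          · simp only [cladeUnion, if_neg hU, Set.mem_sUnion] at hy
            obtain ⟨C, hCU, hyC⟩ := hy
            obtain ⟨wc, hwcE, hwcCU⟩ := hcov ℓ U hw C hCU
            have hwc : wc ∈ V := (hedge _ hwcE).2
            have hwcne : wc ≠ HNode.ua := hnoua _ _ hwcE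
            -- C is a strict subset of the clade union
            obtain ⟨hne', hdisj, hnsing, hUfin, hCfin⟩ := hvalid ℓ U hw
            obtain ⟨C', hC'U, hC'ne⟩ : ∃ C' ∈ U, C' ≠ C := by
              by_contra hcon
              push_neg at hcon
              exact hnsing C (Set.eq_singleton_iff_unique_mem.mpr ⟨hCU, hcon⟩)
            obtain ⟨z, hz⟩ := Set.nonempty_iff_ne_empty.mpr (hne' C' hC'U)
            have hzC : z ∉ C :=
              fun hzC => (hdisj C' hC'U C hCU hC'ne).ne_of_mem hz hzC rfl
            have hss : C ⊂ ⋃₀ U := by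
              constructor
              · exact fun x hx => ⟨C, hCU, hx⟩
              · intro hsub
                exact hzC (hsub ⟨C', hC'U, hz⟩)
            have hfinU : (⋃₀ U).Finite := Set.Finite.sUnion hUfin hCfin
            have hlt : C.ncard < (⋃₀ U).ncard := Set.ncard_lt_ncard hss hfinU
            have hcard' : (cladeUnion (HNode.node ℓ U)).ncard = (⋃₀ U).ncard := by
              simp [cladeUnion, hU]
            have hCn : (cladeUnion wc).ncard ≤ n := by
              rw [hwcCU]; omega
            have hreach := ih wc hwc hwcne hCn y (by rw [hwcCU]; exact hyC)
            exact Relation.ReflTransGen.head hwcE hreach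
    intro y hy
    exact key (cladeUnion v).ncard v hv hne le_rfl y hy

/-- Lemma `reachableleaves`: in a history sDAG or subhistory thereof,
the set of labels of leaf nodes reachable from a non-UA node `v` is `CU(v)`. -/
theorem reachable_leaf_labels_eq_cladeUnion
    (V : Set (HNode Y)) (E : Set (HNode Y × HNode Y))
    (h : IsHSDAG V E ∨ ∃ V₀ E₀, IsHSDAG V₀ E₀ ∧ IsSubhistory V₀ E₀ V E)
    (v : HNode Y) (hv : v ∈ V) (hne : v ≠ HNode.ua) :
    {ℓ : Y | Reach E v (HNode.node ℓ ∅)} = cladeUnion v := by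
  rcases h with hD | ⟨V₀, E₀, hD, vr, hS⟩
  · exact aux_reachable_leaf_labels V E hD.valid hD.edge_mem hD.edge_clade hD.clade_cov
      (fun a b hab hb => hD.no_in_ua a (hb ▸ hab)) v hv hne
  · refine aux_reachable_leaf_labels V E ?_ hS.edge_mem ?_ ?_ ?_ v hv hne
    · exact fun ℓ U hmem => hD.valid ℓ U (hS.subV hmem)
    · exact fun ℓ U w hw => hD.edge_clade ℓ U w (hS.subE hw)
    · intro ℓ U hmem C hC
      obtain ⟨w, hw, -⟩ := hS.unique_desc ℓ U hmem C hC
      exact ⟨w, hw.1, hw.2⟩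
    · intro a b hab hb
      subst hb
      exact hS.ua_not_mem (hS.edge_mem _ hab).2

end HistorySDAGs
end

section
/- A history sDAG (V,E) is a history if and only if (V,E) is a tree (that is, no node of V is the target of two distinct edges of E) and E contains exactly one edge whose parent node is ρ. -/
universe u v

namespace HistorySDAGs

variable {Y : Type u}

variable {W : Type v}

/-!
Along every edge leaving a node other than `ρ` the clade union shrinks strictly, because a
subpartition has at least two disjoint nonempty clades. In a history, two children of the
same node whose clade unions meet must coincide (for `ρ` since it has one child, otherwise
since clades of a subpartition are disjoint and each node-clade pair has one edge). Following
two paths from `ρ` to the parents of a common node, this forces the paths to agree, so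
parents are unique. Conversely, in a tree every node below the pair `(v, C)` reaches the leaf
`(y, ∅)` for any `y ∈ C` (the descent terminates as clade unions are finite); two such nodes
are then comparable for reachability, and equal clade unions rule out a nonempty path between
them.
-/

section

variable {V : Set (HNode Y)} {E : Set (HNode Y × HNode Y)}

theorem subset_cladeUnion_of_mem {ℓ : Y} {U : Set (Set Y)} {C : Set Y} (hC : C ∈ U) :
    C ⊆ cladeUnion (HNode.node ℓ U) := by
  have hU : U ≠ ∅ := Set.nonempty_iff_ne_empty.mp ⟨C, hC⟩
  simp only [cladeUnion, if_neg hU]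
  exact Set.subset_sUnion_of_mem hC

namespace IsPart

variable {U : Set (Set Y)}

theorem eq_of_inter_nonempty (hU : IsPart U) {C₁ C₂ : Set Y} (h₁ : C₁ ∈ U) (h₂ : C₂ ∈ U)
    (h : (C₁ ∩ C₂).Nonempty) : C₁ = C₂ := by
  by_contra hne
  exact Set.not_disjoint_iff_nonempty_inter.mpr h (hU.2.1 C₁ h₁ C₂ h₂ hne)

theorem ssubset_cladeUnion (hU : IsPart U) (ℓ : Y) {C : Set Y} (hC : C ∈ U) :
    C ⊂ cladeUnion (HNode.node ℓ U) := by
  obtain ⟨C', hC', hne⟩ : ∃ C' ∈ U, C' ≠ C := by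
    by_contra! hall
    exact hU.2.2.1 C (Set.eq_singleton_iff_unique_mem.mpr ⟨hC, hall⟩)
  obtain ⟨y, hy⟩ := Set.nonempty_iff_ne_empty.mpr (hU.1 C' hC')
  refine (Set.ssubset_iff_of_subset (subset_cladeUnion_of_mem hC)).mpr
    ⟨y, subset_cladeUnion_of_mem hC' hy, fun hyC => hne ?_⟩
  exact hU.eq_of_inter_nonempty hC' hC ⟨y, hy, hyC⟩

theorem cladeUnion_nonempty (hU : IsPart U) (ℓ : Y) :
    (cladeUnion (HNode.node ℓ U)).Nonempty := by
  by_cases h0 : U = ∅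
  · simp [cladeUnion, h0]
  · obtain ⟨C, hC⟩ := Set.nonempty_iff_ne_empty.mpr h0
    exact (Set.nonempty_iff_ne_empty.mpr (hU.1 C hC)).mono (subset_cladeUnion_of_mem hC)

theorem cladeUnion_finite (hU : IsPart U) (ℓ : Y) : (cladeUnion (HNode.node ℓ U)).Finite := by
  by_cases h0 : U = ∅
  · simp [cladeUnion, h0]
  · simp only [cladeUnion, if_neg h0]
    exact hU.2.2.2.1.sUnion hU.2.2.2.2

end IsPart

def SiblingsSeparated (E : Set (HNode Y × HNode Y)) : Prop :=
  ∀ r c c', (r, c) ∈ E → (r, c') ∈ E → (cladeUnion c ∩ cladeUnion c').Nonempty → c = c'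

theorem IsHistory.siblingsSeparated (hH : IsHistory V E) : SiblingsSeparated E := by
  obtain ⟨h, ⟨root, -, hroot⟩, hud⟩ := hH
  rintro (_ | ⟨ℓ, U⟩) c c' hc hc' hcc'
  · rw [hroot c hc, hroot c' hc']
  · have hv := (h.edge_mem _ hc).1
    have hC := h.edge_clade ℓ U c hc
    have hC' := h.edge_clade ℓ U c' hc'
    exact (hud ℓ U hv _ hC).unique ⟨hc, rfl⟩
      ⟨hc', ((h.valid ℓ U hv).eq_of_inter_nonempty hC hC' hcc').symm⟩

namespace IsHSDAG

theorem snd_ne_ua (h : IsHSDAG V E) {w v : HNode Y} (he : (w, v) ∈ E) : v ≠ HNode.ua := by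
  rintro rfl
  exact h.no_in_ua w he

theorem cladeUnion_snd_nonempty (h : IsHSDAG V E) {w v : HNode Y} (he : (w, v) ∈ E) :
    (cladeUnion v).Nonempty := by
  cases v with
  | ua => exact absurd rfl (h.snd_ne_ua he)
  | node ℓ U => exact (h.valid ℓ U (h.edge_mem _ he).2).cladeUnion_nonempty ℓ

theorem cladeUnion_finite (h : IsHSDAG V E) {v : HNode Y} (hv : v ∈ V) :
    (cladeUnion v).Finite := by
  cases v with
  | ua => simp [cladeUnion]
  | node ℓ U => exact (h.valid ℓ U hv).cladeUnion_finite ℓ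

theorem cladeUnion_ssubset_of_mem (h : IsHSDAG V E) {w v : HNode Y} (he : (w, v) ∈ E)
    (hw : w ≠ HNode.ua) : cladeUnion v ⊂ cladeUnion w := by
  cases w with
  | ua => exact absurd rfl hw
  | node ℓ U =>
    exact (h.valid ℓ U (h.edge_mem _ he).1).ssubset_cladeUnion ℓ (h.edge_clade ℓ U v he)

theorem cladeUnion_ssubset_of_transGen (h : IsHSDAG V E) {u v : HNode Y}
    (huv : Relation.TransGen (fun x y => (x, y) ∈ E) u v) (hu : u ≠ HNode.ua) :
    cladeUnion v ⊂ cladeUnion u := by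
  induction huv using Relation.TransGen.head_induction_on with
  | single he => exact h.cladeUnion_ssubset_of_mem he hu
  | head he _ ih => exact (ih (h.snd_ne_ua he)).trans (h.cladeUnion_ssubset_of_mem he hu)

theorem eq_of_reach_of_cladeUnion_eq (h : IsHSDAG V E) {u v : HNode Y} (huv : Reach E u v)
    (hu : u ≠ HNode.ua) (hcu : cladeUnion u = cladeUnion v) : u = v := by
  rcases Relation.reflTransGen_iff_eq_or_transGen.mp huv with rfl | huv
  · rfl
  · exact absurd hcu (h.cladeUnion_ssubset_of_transGen huv hu).ne'

theorem reach_leaf (h : IsHSDAG V E) {v : HNode Y} (hv : v ∈ V) {y : Y}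
    (hy : y ∈ cladeUnion v) : Reach E v (HNode.node y ∅) := by
  induction hn : (cladeUnion v).ncard using Nat.strong_induction_on generalizing v with
  | _ n ih =>
  cases v with
  | ua => simp [cladeUnion] at hy
  | node ℓ U =>
    by_cases h0 : U = ∅
    · subst h0
      obtain rfl : y = ℓ := by simpa [cladeUnion] using hy
      exact .refl
    · obtain ⟨C, hC, hyC⟩ : ∃ C ∈ U, y ∈ C := by simpa [cladeUnion, h0] using hy
      obtain ⟨c, hc, rfl⟩ := h.clade_cov ℓ U hv C hC
      have hlt :=
        Set.ncard_lt_ncard (h.cladeUnion_ssubset_of_mem hc nofun) (h.cladeUnion_finite hv)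
      exact .head hc (ih _ (hn ▸ hlt) (h.edge_mem _ hc).2 hyC rfl)

theorem uniqueDesc_of_parent_unique (h : IsHSDAG V E)
    (hpar : ∀ x a b : HNode Y, (a, x) ∈ E → (b, x) ∈ E → a = b) : UniqueDesc V E := by
  intro ℓ U hv C hC
  obtain ⟨c, hc, hcC⟩ := h.clade_cov ℓ U hv C hC
  refine ⟨c, ⟨hc, hcC⟩, fun c' ⟨hc', hc'C⟩ => ?_⟩
  obtain ⟨y, hy⟩ := Set.nonempty_iff_ne_empty.mpr ((h.valid ℓ U hv).1 C hC)
  have hleaf : ∀ {d}, (HNode.node ℓ U, d) ∈ E → cladeUnion d = C →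
      Relation.ReflTransGen (flip fun x y => (x, y) ∈ E) (HNode.node y ∅) d :=
    fun hd hdC => Relation.reflTransGen_swap.mpr (h.reach_leaf (h.edge_mem _ hd).2 (hdC ▸ hy))
  have hcu : cladeUnion c' = cladeUnion c := hc'C.trans hcC.symm
  rcases Relation.ReflTransGen.total_of_right_unique (fun x a b => hpar x a b)
      (hleaf hc' hc'C) (hleaf hc hcC) with hcc' | hc'c
  · exact (h.eq_of_reach_of_cladeUnion_eq (Relation.reflTransGen_swap.mp hcc')
      (h.snd_ne_ua hc) hcu.symm).symm
  · exact h.eq_of_reach_of_cladeUnion_eq (Relation.reflTransGen_swap.mp hc'c) (h.snd_ne_ua hc') hcu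

theorem eq_of_mem_of_reach_of_mem (h : IsHSDAG V E) (hs : SiblingsSeparated E)
    {r b x : HNode Y} (hrx : (r, x) ∈ E) (hrb : Reach E r b) (hbx : (b, x) ∈ E) : b = r := by
  rcases hrb.cases_head with rfl | ⟨c, hrc, hcb⟩
  · rfl
  · have hxc := h.cladeUnion_ssubset_of_transGen (.tail' hcb hbx) (h.snd_ne_ua hrc)
    obtain ⟨y, hy⟩ := h.cladeUnion_snd_nonempty hrx
    obtain rfl : x = c := hs r x c hrx hrc ⟨y, hy, hxc.subset hy⟩
    exact absurd hxc (ssubset_irrefl _)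

theorem eq_of_reach_of_reach (h : IsHSDAG V E) (hs : SiblingsSeparated E)
    {r a b x : HNode Y} (hra : Reach E r a) (hrb : Reach E r b) (hax : (a, x) ∈ E)
    (hbx : (b, x) ∈ E) : a = b := by
  induction hra using Relation.ReflTransGen.head_induction_on generalizing b with
  | refl => exact (h.eq_of_mem_of_reach_of_mem hs hax hrb hbx).symm
  | head hrc hca ih =>
    rcases hrb.cases_head with rfl | ⟨c', hrc', hc'b⟩
    · exact h.eq_of_mem_of_reach_of_mem hs hbx (.head hrc hca) hax
    · obtain ⟨y, hy⟩ := h.cladeUnion_snd_nonempty hax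
      have hxc := h.cladeUnion_ssubset_of_transGen (.tail' hca hax) (h.snd_ne_ua hrc)
      have hxc' := h.cladeUnion_ssubset_of_transGen (.tail' hc'b hbx) (h.snd_ne_ua hrc')
      obtain rfl := hs _ _ _ hrc hrc' ⟨y, hxc.subset hy, hxc'.subset hy⟩
      exact ih hc'b hbx

theorem parent_unique_of_siblingsSeparated (h : IsHSDAG V E) (hs : SiblingsSeparated E) :
    ∀ x a b : HNode Y, (a, x) ∈ E → (b, x) ∈ E → a = b := fun _ a b hax hbx =>
  h.eq_of_reach_of_reach hs (h.reach_ua a (h.edge_mem _ hax).1)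
    (h.reach_ua b (h.edge_mem _ hbx).1) hax hbx

end IsHSDAG

end

/-- Lemma `historyaltdef`: a history sDAG is a history iff it is a tree
(no node is the target of two distinct edges) and exactly one edge descends from `ρ`. -/
theorem isHistory_iff_tree_and_unique_root_edge
    (V : Set (HNode Y)) (E : Set (HNode Y × HNode Y)) (h : IsHSDAG V E) :
    IsHistory V E ↔
      ((∀ x a b : HNode Y, (a, x) ∈ E → (b, x) ∈ E → a = b) ∧
        (∃! v, (HNode.ua, v) ∈ E)) := by
  refine ⟨fun hH => ⟨h.parent_unique_of_siblingsSeparated hH.siblingsSeparated, hH.2.1⟩, ?_⟩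
  rintro ⟨hpar, hroot⟩
  exact ⟨h, hroot, h.uniqueDesc_of_parent_unique hpar⟩

end HistorySDAGs
end

section
/- Every history sDAG (V,E) is acyclic: there is no nonempty directed cycle of edges of E. -/
universe u v

namespace HistorySDAGs

variable {Y : Type u}

variable {W : Type v}

/-! Along every edge out of a node `(ℓ, U)` the clade union shrinks strictly: the child's clade
union is one clade of the subpartition `U`, and `|U| ≠ 1` together with disjointness and
nonemptiness of clades makes it a proper subset of `⋃₀ U`. Ranking `ρ` above all other nodes,
every edge therefore strictly decreases the rank, so no cycle exists. -/

theorem IsPart.ssubset_sUnion {U : Set (Set Y)} (hU : IsPart U) {C : Set Y} (hC : C ∈ U) :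
    C ⊂ ⋃₀ U := by
  obtain ⟨hne, hdisj, hnot_single, -, -⟩ := hU
  obtain ⟨C', hC', hC'C⟩ : ∃ C' ∈ U, C' ≠ C := by
    by_contra! hall
    exact hnot_single C (Set.eq_singleton_iff_unique_mem.mpr ⟨hC, hall⟩)
  obtain ⟨x, hx⟩ := Set.nonempty_iff_ne_empty.mpr (hne C' hC')
  refine (Set.ssubset_iff_of_subset (Set.subset_sUnion_of_mem hC)).mpr ⟨x, ⟨C', hC', hx⟩, ?_⟩
  exact Set.disjoint_left.mp (hdisj C' hC' C hC hC'C) hx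

theorem IsPart.ncard_lt_ncard_sUnion {U : Set (Set Y)} (hU : IsPart U) {C : Set Y}
    (hC : C ∈ U) : C.ncard < (⋃₀ U).ncard :=
  Set.ncard_lt_ncard (hU.ssubset_sUnion hC) (hU.2.2.2.1.sUnion hU.2.2.2.2)

theorem cladeUnion_node_of_mem {ℓ : Y} {U : Set (Set Y)} {C : Set Y} (hC : C ∈ U) :
    cladeUnion (HNode.node ℓ U) = ⋃₀ U := by
  simp [cladeUnion, Set.nonempty_iff_ne_empty.mp ⟨C, hC⟩]

noncomputable def rank : HNode Y → WithTop ℕ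
  | HNode.ua => ⊤
  | HNode.node ℓ U => (cladeUnion (HNode.node ℓ U)).ncard

theorem IsHSDAG.rank_lt {V : Set (HNode Y)} {E : Set (HNode Y × HNode Y)} (h : IsHSDAG V E)
    {a b : HNode Y} (hab : (a, b) ∈ E) : rank b < rank a := by
  cases b with
  | ua => exact absurd hab (h.no_in_ua a)
  | node ℓ' U' =>
    cases a with
    | ua => exact WithTop.coe_lt_top _
    | node ℓ U =>
      have hC := h.edge_clade ℓ U _ hab
      have hU := h.valid ℓ U (h.edge_mem _ hab).1
      simp only [rank, cladeUnion_node_of_mem hC, Nat.cast_lt]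
      exact hU.ncard_lt_ncard_sUnion hC

/-- Lemma `acyclic`: a history sDAG is acyclic. -/
theorem hsdag_acyclic
    (V : Set (HNode Y)) (E : Set (HNode Y × HNode Y)) (h : IsHSDAG V E) :
    ∀ v : HNode Y, ¬ Relation.TransGen (fun a b => (a, b) ∈ E) v v := by
  intro v hcycle
  have hdesc : Relation.TransGen (· > ·) (rank v) (rank v) :=
    Relation.TransGen.lift (r := fun a b => (a, b) ∈ E) rank (fun _ _ => h.rank_lt) v v hcycle
  rw [Relation.transGen_eq_self] at hdesc
  exact lt_irrefl _ hdesc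

end HistorySDAGs
end

section
/- If (V,E) and (V',E') are history sDAGs on the same label set Y, then their graph union (V ∪ V', E ∪ E') is also a history sDAG on labels Y. -/
universe u v

namespace HistorySDAGs

variable {Y : Type u}

variable {W : Type v}

theorem mem_unionV {T : Set (Hist Y)} {v : HNode Y} : v ∈ unionV T ↔ ∃ t ∈ T, v ∈ t.1 := by
  simp [unionV]

theorem mem_unionE {T : Set (Hist Y)} {e : HNode Y × HNode Y} :
    e ∈ unionE T ↔ ∃ t ∈ T, e ∈ t.2 := by
  simp [unionE]

theorem subset_unionV {T : Set (Hist Y)} {t : Hist Y} (ht : t ∈ T) : t.1 ⊆ unionV T :=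
  Set.subset_biUnion_of_mem (u := Prod.fst) ht

theorem subset_unionE {T : Set (Hist Y)} {t : Hist Y} (ht : t ∈ T) : t.2 ⊆ unionE T :=
  Set.subset_biUnion_of_mem (u := Prod.snd) ht

theorem Reach.mono {E E' : Set (HNode Y × HNode Y)} (hE : E ⊆ E') {a b : HNode Y}
    (hab : Reach E a b) : Reach E' a b :=
  Relation.ReflTransGen.mono (fun _ _ he => hE he) a b hab

theorem isHSDAG_unionV {T : Set (Hist Y)} (hT : T.Nonempty) (h : ∀ t ∈ T, IsHSDAG t.1 t.2) :
    IsHSDAG (unionV T) (unionE T) where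
  ua_mem :=
    let ⟨t, ht⟩ := hT
    subset_unionV ht (h t ht).ua_mem
  valid ℓ U hv :=
    let ⟨t, ht, hv⟩ := mem_unionV.1 hv
    (h t ht).valid ℓ U hv
  edge_mem e he :=
    let ⟨t, ht, he⟩ := mem_unionE.1 he
    ((h t ht).edge_mem e he).imp (subset_unionV ht ·) (subset_unionV ht ·)
  reach_ua v hv :=
    let ⟨t, ht, hv⟩ := mem_unionV.1 hv
    ((h t ht).reach_ua v hv).mono (subset_unionE ht)
  no_in_ua v he :=
    let ⟨t, ht, he⟩ := mem_unionE.1 he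
    (h t ht).no_in_ua v he
  edge_clade ℓ U v he :=
    let ⟨t, ht, he⟩ := mem_unionE.1 he
    (h t ht).edge_clade ℓ U v he
  clade_cov ℓ U hv C hC :=
    let ⟨t, ht, hv⟩ := mem_unionV.1 hv
    let ⟨w, hw, hwC⟩ := (h t ht).clade_cov ℓ U hv C hC
    ⟨w, subset_unionE ht hw, hwC⟩

/-- Lemma `historyDAGunion`: the graph union of two history sDAGs on
the same label set is a history sDAG. -/
theorem hsdag_union
    (V V' : Set (HNode Y)) (E E' : Set (HNode Y × HNode Y))
    (h : IsHSDAG V E) (h' : IsHSDAG V' E') :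
    IsHSDAG (V ∪ V') (E ∪ E') := by
  have hpair := isHSDAG_unionV (T := {(V, E), (V', E')}) (Set.insert_nonempty _ _) (by
    rintro t (rfl | rfl)
    exacts [h, h'])
  simpa [unionV, unionE] using hpair

end HistorySDAGs
end
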